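/- arXiv:2008.11441 — 4 statements merged into one kernel-verified Lean document; each statement's English description precedes it below -/
import Mathlib

section
/- Let A_1, …, A_m ∈ ℝ^{n×n}, let d ≥ 1 be an integer, let γ ≥ 0, and let p ∈ ℝ[x_1,…,x_n] be a homogeneous polynomial of degree 2d with p(x) > 0 for all x ≠ 0. If p(A_i x) ≤ γ^{2d} p(x) for all x ∈ ℝ^n and all i = 1,…,m, then ρ(𝒜) ≤ γ. -/
open MvPolynomial Filter

/-- Operator norm of a real matrix induced by the Euclidean norm on `ℝ^n`. -/
noncomputable def opNorm {n : ℕ} (A : Matrix (Fin n) (Fin n) ℝ) : ℝ :=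
  ‖LinearMap.toContinuousLinearMap (Matrix.toEuclideanLin A)‖

/-- Joint spectral radius of a family of matrices `A 0, …, A (m-1)`:
`ρ(𝒜) = limsup_{k→∞} max_{σ ∈ {1,…,m}^k} ‖A_{σ₁} ⋯ A_{σₖ}‖^{1/k}`. -/
noncomputable def jsr {n m : ℕ} (A : Fin m → Matrix (Fin n) (Fin n) ℝ) : ℝ :=
  Filter.limsup
    (fun k : ℕ => ⨆ σ : Fin k → Fin m,
      opNorm ((List.ofFn fun j => A (σ j)).prod) ^ (1 / (k : ℝ)))
    Filter.atTop

/-! A positive definite form `p` of degree `2d` is squeezed between two multiples of `‖x‖^{2d}`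
(compactness of the unit sphere). Since `p(A_σ x) ≤ γ^{2dk} p(x) = p(γ^k x)` for every product
`A_σ` of length `k`, this yields `‖A_σ‖ ≤ K γ^k` with `K` independent of `k`, and `K^{1/k} → 1`. -/

open scoped Matrix

theorem MvPolynomial.IsHomogeneous.eval_smul {R σ : Type*} [CommSemiring R]
    {p : MvPolynomial σ R} {N : ℕ} (hp : p.IsHomogeneous N) (r : R) (x : σ → R) :
    eval (r • x) p = r ^ N * eval x p := by
  simp only [eval_eq, Finset.mul_sum]
  refine Finset.sum_congr rfl fun d hd => ?_
  have hdeg : ∑ i ∈ d.support, d i = N := by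
    simpa [Finsupp.weight_apply, Finsupp.sum] using hp (mem_support_iff.mp hd)
  simp only [Pi.smul_apply, smul_eq_mul, mul_pow, Finset.prod_mul_distrib,
    Finset.prod_pow_eq_pow_sum, hdeg]
  ring

section HomogeneousFunction

variable {E : Type*} [NormedAddCommGroup E] [NormedSpace ℝ E] {f : E → ℝ} {N : ℕ}

lemma apply_eq_norm_pow_mul_apply_inv_norm_smul (hN : N ≠ 0)
    (hf : ∀ (r : ℝ) x, f (r • x) = r ^ N * f x) (x : E) :
    f x = ‖x‖ ^ N * f (‖x‖⁻¹ • x) := by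
  rcases eq_or_ne x 0 with rfl | hx
  · simpa [zero_pow hN] using hf 0 0
  · rw [hf, ← mul_assoc, ← mul_pow, mul_inv_cancel₀ (norm_ne_zero_iff.mpr hx), one_pow, one_mul]

lemma inv_norm_smul_mem_sphere {x : E} (hx : x ≠ 0) : ‖x‖⁻¹ • x ∈ Metric.sphere (0 : E) 1 := by
  simpa using norm_smul_inv_norm (𝕜 := ℝ) hx

variable [ProperSpace E]

lemma exists_pos_mul_norm_pow_le (hN : N ≠ 0) (hcont : Continuous f)
    (hf : ∀ (r : ℝ) x, f (r • x) = r ^ N * f x) (hpos : ∀ x ≠ 0, 0 < f x) :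
    ∃ c > 0, ∀ x, c * ‖x‖ ^ N ≤ f x := by
  obtain ⟨c, hc, hcf⟩ := (isCompact_sphere (0 : E) 1).exists_forall_le' hcont.continuousOn
    fun u hu => hpos u (ne_zero_of_mem_sphere one_ne_zero ⟨u, hu⟩)
  refine ⟨c, hc, fun x => ?_⟩
  rw [apply_eq_norm_pow_mul_apply_inv_norm_smul hN hf x, mul_comm]
  rcases eq_or_ne x 0 with rfl | hx
  · simp [zero_pow hN]
  · exact mul_le_mul_of_nonneg_left (hcf _ (inv_norm_smul_mem_sphere hx)) (by positivity)

lemma exists_le_mul_norm_pow (hN : N ≠ 0) (hcont : Continuous f)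
    (hf : ∀ (r : ℝ) x, f (r • x) = r ^ N * f x) :
    ∃ C, ∀ x, f x ≤ C * ‖x‖ ^ N := by
  obtain ⟨C, hC⟩ := (isCompact_sphere (0 : E) 1).bddAbove_image hcont.continuousOn
  refine ⟨C, fun x => ?_⟩
  rw [apply_eq_norm_pow_mul_apply_inv_norm_smul hN hf x, mul_comm C]
  rcases eq_or_ne x 0 with rfl | hx
  · simp [zero_pow hN]
  · exact mul_le_mul_of_nonneg_left (hC ⟨_, inv_norm_smul_mem_sphere hx, rfl⟩) (by positivity)

lemma exists_norm_le_mul_norm_of_apply_le (hN : N ≠ 0) (hcont : Continuous f)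
    (hf : ∀ (r : ℝ) x, f (r • x) = r ^ N * f x) (hpos : ∀ x ≠ 0, 0 < f x) :
    ∃ K > 0, ∀ x y, f x ≤ f y → ‖x‖ ≤ K * ‖y‖ := by
  obtain ⟨c, hc, hcf⟩ := exists_pos_mul_norm_pow_le hN hcont hf hpos
  obtain ⟨C, hfC⟩ := exists_le_mul_norm_pow hN hcont hf
  set K := max 1 (C / c)
  refine ⟨K, by positivity, fun x y hxy => le_of_pow_le_pow_left₀ hN (by positivity) ?_⟩
  calc ‖x‖ ^ N ≤ C / c * ‖y‖ ^ N := by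
        rw [div_mul_eq_mul_div, le_div_iff₀ hc]
        linarith [hcf x, hfC y]
    _ ≤ K ^ N * ‖y‖ ^ N := by
        gcongr
        exact (le_max_right _ _).trans (le_self_pow₀ (le_max_left _ _) hN)
    _ = (K * ‖y‖) ^ N := (mul_pow _ _ _).symm

end HomogeneousFunction

lemma apply_list_prod_mulVec_le {ι R : Type*} [Fintype ι] [DecidableEq ι] [Semiring R]
    {f : (ι → R) → ℝ} {a : ℝ} (ha : 0 ≤ a) (L : List (Matrix ι ι R))
    (hL : ∀ B ∈ L, ∀ x, f (B *ᵥ x) ≤ a * f x) (x : ι → R) :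
    f (L.prod *ᵥ x) ≤ a ^ L.length * f x := by
  induction L generalizing x with
  | nil => simp
  | cons B L ih =>
    rw [List.prod_cons, ← Matrix.mulVec_mulVec, List.length_cons, pow_succ', mul_assoc]
    calc f (B *ᵥ (L.prod *ᵥ x)) ≤ a * f (L.prod *ᵥ x) := hL B List.mem_cons_self _
      _ ≤ a * (a ^ L.length * f x) := by
          gcongr
          exact ih (fun B hB => hL B (List.mem_cons_of_mem _ hB)) x

lemma opNorm_le_of_forall_norm_le {n : ℕ} {B : Matrix (Fin n) (Fin n) ℝ} {K : ℝ} (hK : 0 ≤ K)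
    (h : ∀ v, ‖B.toEuclideanLin v‖ ≤ K * ‖v‖) : opNorm B ≤ K :=
  ContinuousLinearMap.opNorm_le_bound _ hK h

lemma jsr_le_of_opNorm_prod_le {n m : ℕ} (A : Fin m → Matrix (Fin n) (Fin n) ℝ) {K γ : ℝ}
    (hK : 0 < K) (hγ : 0 ≤ γ)
    (h : ∀ k (σ : Fin k → Fin m), opNorm (List.ofFn fun j => A (σ j)).prod ≤ K * γ ^ k) :
    jsr A ≤ γ := by
  set u : ℕ → ℝ := fun k => ⨆ σ : Fin k → Fin m,
    opNorm ((List.ofFn fun j => A (σ j)).prod) ^ (1 / (k : ℝ))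
  have hu_nonneg : ∀ k, 0 ≤ u k := fun k =>
    Real.iSup_nonneg fun σ => Real.rpow_nonneg (norm_nonneg _) _
  have hu_le : ∀ k ≠ 0, u k ≤ K ^ (1 / (k : ℝ)) * γ := fun k hk =>
    Real.iSup_le (fun σ => calc
      _ ≤ (K * γ ^ k) ^ (1 / (k : ℝ)) := by gcongr; exacts [norm_nonneg _, h k σ]
      _ = K ^ (1 / (k : ℝ)) * γ := by
        rw [Real.mul_rpow hK.le (by positivity), one_div, Real.pow_rpow_inv_natCast hγ hk])
      (by positivity)
  have hlim : Tendsto (fun k : ℕ => K ^ (1 / (k : ℝ)) * γ) atTop (nhds γ) := by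
    have := ((Real.continuousAt_const_rpow hK.ne').tendsto.comp
      tendsto_one_div_atTop_nhds_zero_nat).mul_const γ
    simpa using this
  calc jsr A = limsup u atTop := rfl
    _ ≤ limsup (fun k : ℕ => K ^ (1 / (k : ℝ)) * γ) atTop :=
        limsup_le_limsup (eventually_atTop.2 ⟨1, fun k hk => hu_le k (by omega)⟩)
          (isBoundedUnder_of_eventually_ge (.of_forall hu_nonneg)).isCoboundedUnder_le
          hlim.isBoundedUnder_le
    _ = γ := hlim.limsup_eq

/-- If `p` is a strictly positive form of degree `2d` with `p(Aᵢx) ≤ γ^{2d} p(x)` for all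
`x` and all `i`, then `ρ(𝒜) ≤ γ`. -/
theorem stmt0 {n m : ℕ} (A : Fin m → Matrix (Fin n) (Fin n) ℝ) (d : ℕ) (hd : 1 ≤ d)
    (γ : ℝ) (hγ : 0 ≤ γ) (p : MvPolynomial (Fin n) ℝ)
    (hp : p.IsHomogeneous (2 * d))
    (hpos : ∀ x : Fin n → ℝ, x ≠ 0 → 0 < MvPolynomial.eval x p)
    (hineq : ∀ (i : Fin m) (x : Fin n → ℝ),
      MvPolynomial.eval ((A i).mulVec x) p ≤ γ ^ (2 * d) * MvPolynomial.eval x p) :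
    jsr A ≤ γ := by
  obtain ⟨K, hK, hnorm⟩ := exists_norm_le_mul_norm_of_apply_le
    (f := fun v : EuclideanSpace ℝ (Fin n) => eval v.ofLp p) (N := 2 * d)
    (by omega) ((continuous_eval p).comp (PiLp.continuous_ofLp 2 _))
    (fun r v => by simp only [WithLp.ofLp_smul, hp.eval_smul])
    (fun v hv => hpos _ (by simpa using hv))
  refine jsr_le_of_opNorm_prod_le A hK hγ fun k σ =>
    opNorm_le_of_forall_norm_le (by positivity) fun v => ?_
  have hprod := apply_list_prod_mulVec_le (f := fun x => eval x p) (by positivity) _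
    (List.forall_mem_ofFn_iff.2 fun j => hineq (σ j)) v.ofLp
  rw [List.length_ofFn] at hprod
  calc _ ≤ K * ‖γ ^ k • v‖ := hnorm _ _ <| by
        rwa [WithLp.ofLp_smul, hp.eval_smul, ← pow_mul, mul_comm k, pow_mul]
    _ = K * γ ^ k * ‖v‖ := by rw [norm_smul, Real.norm_of_nonneg (by positivity), mul_assoc]
end

section
/- Let J ⊆ {1,…,n} and let A_1, …, A_m ∈ ℝ^{n×n} be matrices whose j-th column is zero for every j ∈ J. Let (p_s)_{s ≥ 0} be a sequence of polynomials in ℝ[x_1,…,x_n] such that supp(p_0) ⊆ {b_j : j ∈ {1,…,n}} and, for every s ≥ 1, supp(p_s) ⊆ supp(p_{s−1}) ∪ ⋃_{i=1}^m supp(p_{s−1}(A_i x)). Then for every s ≥ 0, supp(p_s) ⊆ Ñ^{n−|J|}_{2d} ∪ {b_j : j ∈ J}. -/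
/-! Both alternatives of the invariant have total degree `2d`, so by induction every `p_s` is
homogeneous of degree `2d`, and substituting linear forms keeps it so. Since the columns of `A_i`
indexed by `J` vanish, no `x_j` with `j ∈ J` occurs in the linear forms `(A_i x)_l`, hence none
occurs in `p_s(A_i x)`. -/

open MvPolynomial

/-- The polynomial `p(Ax)`, obtained by substituting the linear forms `(Ax)_i` for `x_i`. -/
noncomputable def polyComp {n : ℕ} (p : MvPolynomial (Fin n) ℝ)
    (A : Matrix (Fin n) (Fin n) ℝ) : MvPolynomial (Fin n) ℝ :=
  MvPolynomial.aeval (fun i => ∑ j, MvPolynomial.C (A i j) * MvPolynomial.X j) p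

namespace MvPolynomial

variable {R σ : Type*} [CommSemiring R] [Fintype σ]

lemma isHomogeneous_iff_forall_sum_eq {p : MvPolynomial σ R} {k : ℕ} :
    p.IsHomogeneous k ↔ ∀ α ∈ p.support, ∑ j, α j = k := by
  have hweight (α : σ →₀ ℕ) : Finsupp.weight 1 α = ∑ j, α j := by
    rw [← Finsupp.degree_eq_sum, Finsupp.degree_eq_weight_one]
    rfl
  simp only [IsHomogeneous, IsWeightedHomogeneous, hweight, mem_support_iff]

lemma ne_zero_of_mem_vars_sum_C_mul_X [Nontrivial R] {a : σ → R} {j : σ}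
    (hj : j ∈ (∑ k, C (a k) * X k).vars) : a j ≠ 0 := by
  classical
  obtain ⟨k, -, hk⟩ := Finset.mem_biUnion.mp (vars_sum_subset _ _ hj)
  obtain rfl : j = k := by simpa using vars_mul _ _ hk
  intro hak
  simp [hak] at hk

end MvPolynomial

section PolyComp

variable {n : ℕ}

lemma isHomogeneous_polyComp {p : MvPolynomial (Fin n) ℝ} {k : ℕ} (hp : p.IsHomogeneous k)
    (A : Matrix (Fin n) (Fin n) ℝ) : (polyComp p A).IsHomogeneous k := by
  have h := hp.aeval (fun l => ∑ j, C (A l j) * X j)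
    fun l => IsHomogeneous.sum _ _ _ fun j _ => isHomogeneous_C_mul_X _ _
  rwa [one_mul] at h

lemma apply_eq_zero_of_mem_support_polyComp {p : MvPolynomial (Fin n) ℝ}
    {A : Matrix (Fin n) (Fin n) ℝ} {j : Fin n} (hj : ∀ l, A l j = 0) {α : Fin n →₀ ℕ}
    (hα : α ∈ (polyComp p A).support) : α j = 0 := by
  by_contra hαj
  have hvars : j ∈ (polyComp p A).vars :=
    (mem_vars_iff_mem_support j).mpr ⟨α, hα, Finsupp.mem_support_iff.mpr hαj⟩
  obtain ⟨l, -, hl⟩ := mem_vars_bind₁ _ _ hvars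
  exact ne_zero_of_mem_vars_sum_C_mul_X hl (hj l)

lemma mem_support_polyComp {p : MvPolynomial (Fin n) ℝ} {k : ℕ} (hp : p.IsHomogeneous k)
    {A : Matrix (Fin n) (Fin n) ℝ} {J : Finset (Fin n)} (hA : ∀ j ∈ J, ∀ l, A l j = 0)
    {α : Fin n →₀ ℕ} (hα : α ∈ (polyComp p A).support) :
    ∑ j, α j = k ∧ ∀ j ∈ J, α j = 0 :=
  ⟨isHomogeneous_iff_forall_sum_eq.mp (isHomogeneous_polyComp hp A) α hα,
    fun j hj => apply_eq_zero_of_mem_support_polyComp (hA j hj) hα⟩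

end PolyComp

theorem stmt3_general {n : ℕ} (d : ℕ) {m : ℕ}
    (A : Fin m → Matrix (Fin n) (Fin n) ℝ)
    (J : Finset (Fin n)) (hA : ∀ (i : Fin m), ∀ j ∈ J, ∀ l, A i l j = 0)
    (p : ℕ → MvPolynomial (Fin n) ℝ)
    (h0 : ∀ α ∈ (p 0).support, ∃ j : Fin n, α = Finsupp.single j (2 * d))
    (hs : ∀ s : ℕ, 1 ≤ s →
      (p s).support ⊆
        (p (s - 1)).support ∪
          Finset.univ.biUnion (fun i : Fin m => (polyComp (p (s - 1)) (A i)).support)) :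
    ∀ s : ℕ, ∀ α ∈ (p s).support,
      ((∑ j, α j) = 2 * d ∧ ∀ j ∈ J, α j = 0) ∨
      (∃ j ∈ J, α = Finsupp.single j (2 * d)) := by
  intro s
  induction s with
  | zero =>
    intro α hα
    obtain ⟨j, rfl⟩ := h0 α hα
    by_cases hj : j ∈ J
    · exact Or.inr ⟨j, hj, rfl⟩
    · refine Or.inl ⟨Finsupp.univ_sum_single_apply j _, fun l hl => Finsupp.single_eq_of_ne ?_⟩
      rintro rfl
      exact hj hl
  | succ s ih =>
    have hhom : (p s).IsHomogeneous (2 * d) := isHomogeneous_iff_forall_sum_eq.mpr fun α hα => by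
      rcases ih α hα with ⟨hsum, -⟩ | ⟨j, -, rfl⟩
      · exact hsum
      · exact Finsupp.univ_sum_single_apply j _
    intro α hα
    rcases Finset.mem_union.mp (hs (s + 1) (by omega) hα) with hprev | hcomp
    · exact ih α hprev
    · obtain ⟨i, -, hi⟩ := Finset.mem_biUnion.mp hcomp
      exact Or.inl (mem_support_polyComp hhom (hA i) hi)

/-- If the matrices `A i` all have zero `j`-th columns for `j ∈ J`, `supp(p₀)` is contained
in `{b_j : j ∈ [n]}` (where `b_j` is the exponent vector `2d·e_j`) and
`supp(p_s) ⊆ supp(p_{s-1}) ∪ ⋃ᵢ supp(p_{s-1}(Aᵢx))` for all `s ≥ 1`, then for every `s`,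
`supp(p_s) ⊆ Ñ^{n-|J|}_{2d} ∪ {b_j : j ∈ J}`. -/
theorem stmt3 {n : ℕ} (d : ℕ) (hd : 1 ≤ d) {m : ℕ}
    (A : Fin m → Matrix (Fin n) (Fin n) ℝ)
    (J : Finset (Fin n)) (hA : ∀ (i : Fin m), ∀ j ∈ J, ∀ l, A i l j = 0)
    (p : ℕ → MvPolynomial (Fin n) ℝ)
    (h0 : ∀ α ∈ (p 0).support, ∃ j : Fin n, α = Finsupp.single j (2 * d))
    (hs : ∀ s : ℕ, 1 ≤ s →
      (p s).support ⊆
        (p (s - 1)).support ∪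
          Finset.univ.biUnion (fun i : Fin m => (polyComp (p (s - 1)) (A i)).support)) :
    ∀ s : ℕ, ∀ α ∈ (p s).support,
      ((∑ j, α j) = 2 * d ∧ ∀ j ∈ J, α j = 0) ∨
      (∃ j ∈ J, α = Finsupp.single j (2 * d)) :=
  stmt3_general d A J hA p h0 hs
end

section
/- Let G be a chordal graph on the vertex set V = {1,…,r} with maximal cliques C_1, …, C_t. If Q ∈ ℝ^{r×r} is a symmetric positive semidefinite matrix such that Q_{uv} = 0 whenever u ≠ v and {u,v} is not an edge of G, then there exist symmetric positive semidefinite matrices Q_1, …, Q_t ∈ ℝ^{r×r} with Q = Σ_{k=1}^t Q_k and, for each k, (Q_k)_{uv} = 0 unless both u ∈ C_k and v ∈ C_k. -/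
/-- A chord of a closed walk: an edge of `G` joining two vertices of the walk that is not
an edge of the walk itself (hence joins two nonconsecutive nodes when the walk is a cycle). -/
def HasChord {V : Type*} (G : SimpleGraph V) {v : V} (w : G.Walk v v) : Prop :=
  ∃ u₁ u₂ : V, u₁ ∈ w.support ∧ u₂ ∈ w.support ∧ G.Adj u₁ u₂ ∧ s(u₁, u₂) ∉ w.edges

/-- A graph is chordal if every cycle of length at least four has a chord. -/
def IsChordal {V : Type*} (G : SimpleGraph V) : Prop :=
  ∀ (v : V) (w : G.Walk v v), w.IsCycle → 4 ≤ w.length → HasChord G w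

/-- `C` is a maximal clique of `G`. -/
def IsMaxClique' {V : Type*} (G : SimpleGraph V) (C : Finset V) : Prop :=
  G.IsClique (C : Set V) ∧ ∀ D : Finset V, G.IsClique (D : Set V) → C ⊆ D → D = C

/-!
By Dirac's lemma, every induced subgraph `G[S]` of a chordal graph has a simplicial vertex `v`,
one whose neighbours form a clique. One step of Cholesky elimination with pivot `v` writes `Q`
as the positive semidefinite rank-one term `(Q v v)⁻¹ q qᵀ` (`q` the `v`-th column), supported
on the clique formed by `v` and its neighbours, plus the Schur complement, which is again
positive semidefinite with the same sparsity pattern and vanishes on row and column `v`.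
Induction on the support gives a sum of positive semidefinite matrices supported on cliques, and
each clique lies in a maximal one.

Dirac's lemma rests on the fact that a minimal separator `T` of two nonadjacent vertices is a
clique: two nonadjacent vertices of `T` are joined by chordless paths through the two sides of
`T`, and these close up to a chordless cycle of length at least four.
-/

namespace SimpleGraph

variable {V : Type*} {G : SimpleGraph V}

namespace Walk

variable {x y u v : V}

theorem exists_length_lt_of_adj_start {p : G.Walk x y} (hv : v ∈ p.support) (hxv : G.Adj x v)
    (he : s(x, v) ∉ p.edges) :
    ∃ q : G.Walk x y, q.length < p.length ∧ q.support ⊆ p.support := by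
  classical
  cases p with
  | nil => exact absurd hxv (by simp_all)
  | cons h p =>
    have hv' : v ∈ p.support := by
      rw [support_cons, List.mem_cons] at hv
      exact hv.resolve_left (fun hvx => hxv.ne hvx.symm)
    have hne : v ≠ p.getVert 0 := by
      rintro rfl
      exact he (by simp)
    refine ⟨.cons hxv (p.dropUntil v hv'), ?_, ?_⟩
    · simpa using p.length_dropUntil_lt_length hv' (by simpa using hne)
    · rw [support_cons, support_cons]
      exact List.cons_subset_cons _ (p.support_dropUntil_subset_support hv')

theorem exists_length_lt_of_isChord {p : G.Walk x y} {e : Sym2 V} (h : p.IsChord e) :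
    ∃ q : G.Walk x y, q.length < p.length ∧ q.support ⊆ p.support := by
  induction e using Sym2.ind with | _ u v =>
  obtain ⟨huv, he, hu, hv⟩ := isChord_sym2Mk.1 h
  clear h
  induction p with
  | nil => simp_all
  | cons h p ih =>
    rw [support_cons, List.mem_cons] at hu hv
    rcases hu with rfl | hu
    · exact exists_length_lt_of_adj_start (List.mem_cons.2 hv) huv he
    rcases hv with rfl | hv
    · exact exists_length_lt_of_adj_start (List.mem_cons_of_mem _ hu) huv.symm
        (by rwa [Sym2.eq_swap])
    obtain ⟨q, hlt, hsub⟩ := ih (by simp_all) hu hv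
    exact ⟨.cons h q, by simpa using hlt, List.cons_subset_cons _ hsub⟩

end Walk

def ReachIn (G : SimpleGraph V) (U : Set V) (x y : V) : Prop :=
  ∃ w : G.Walk x y, ∀ z ∈ w.support, z ∈ U

namespace ReachIn

variable {U W : Set V} {a b u v x y z : V}

theorem refl (hx : x ∈ U) : G.ReachIn U x x := ⟨.nil, by simpa using hx⟩

theorem of_adj (h : G.Adj x y) (hx : x ∈ U) (hy : y ∈ U) : G.ReachIn U x y :=
  ⟨h.toWalk, by simp [hx, hy]⟩

theorem symm (h : G.ReachIn U x y) : G.ReachIn U y x := by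
  obtain ⟨w, hw⟩ := h
  exact ⟨w.reverse, by simpa using hw⟩

theorem trans (h : G.ReachIn U x y) (h' : G.ReachIn U y z) : G.ReachIn U x z := by
  obtain ⟨w, hw⟩ := h
  obtain ⟨w', hw'⟩ := h'
  refine ⟨w.append w', fun u hu => ?_⟩
  rcases (Walk.mem_support_append_iff _ _).1 hu with hu | hu
  exacts [hw u hu, hw' u hu]

theorem mono (h : G.ReachIn U x y) (hUW : U ⊆ W) : G.ReachIn W x y := by
  obtain ⟨w, hw⟩ := h
  exact ⟨w, fun u hu => hUW (hw u hu)⟩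

theorem mem_left (h : G.ReachIn U x y) : x ∈ U := by
  obtain ⟨w, hw⟩ := h
  exact hw x w.start_mem_support

theorem mem_right (h : G.ReachIn U x y) : y ∈ U := h.symm.mem_left

theorem adj_right (h : G.ReachIn U x y) (hyz : G.Adj y z) (hz : z ∈ U) : G.ReachIn U x z :=
  h.trans (of_adj hyz h.mem_right hz)

theorem reachIn_setOf (h : G.ReachIn U a x) : G.ReachIn {y | G.ReachIn U a y} a x := by
  classical
  obtain ⟨w, hw⟩ := h
  exact ⟨w, fun z hz => ⟨w.takeUntil z hz,
    fun u hu => hw u (w.support_takeUntil_subset_support hz hu)⟩⟩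

theorem exists_isPath_isChordless (h : G.ReachIn U x y) :
    ∃ p : G.Walk x y, p.IsPath ∧ p.IsChordless ∧ ∀ z ∈ p.support, z ∈ U := by
  classical
  obtain ⟨w, hw⟩ := h
  have hex : ∃ n, ∃ p : G.Walk x y, p.IsPath ∧ (∀ z ∈ p.support, z ∈ U) ∧ p.length = n :=
    ⟨_, w.bypass, w.bypass_isPath, fun z hz => hw z (w.support_bypass_subset_support hz), rfl⟩
  obtain ⟨p, hp, hpU, hlen⟩ := Nat.find_spec hex
  refine ⟨p, hp, fun e he => ?_, hpU⟩
  obtain ⟨q, hq, hqp⟩ := Walk.exists_length_lt_of_isChord he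
  exact Nat.find_min hex (hlen ▸ q.length_bypass_le_length.trans_lt hq)
    ⟨q.bypass, q.bypass_isPath, fun z hz => hpU z (hqp (q.support_bypass_subset_support hz)), rfl⟩

theorem exists_adj_of_not_reachIn {t : V}
    (h : G.ReachIn (insert t U) a b) (hn : ¬G.ReachIn U a b) (ha : a ∈ U) :
    ∃ u, G.ReachIn U a u ∧ G.Adj u t := by
  obtain ⟨w, hw⟩ := h
  obtain ⟨d, hd, hfst, hsnd⟩ := w.exists_boundary_dart {x | G.ReachIn U a x} (.refl ha) hn
  refine ⟨d.fst, hfst, ?_⟩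
  rcases hw d.snd (w.dart_snd_mem_support_of_mem_darts hd) with hdt | hdU
  · exact hdt ▸ d.adj
  · exact absurd (hfst.adj_right d.adj hdU) hsnd

theorem insert_insert {s t : V} (h : G.ReachIn W u v)
    (hsu : G.Adj s u) (hvt : G.Adj v t) : G.ReachIn (insert s (insert t W)) s t :=
  have hW : W ⊆ insert s (insert t W) := fun _ hx => .inr (.inr hx)
  ((of_adj hsu (.inl rfl) (hW h.mem_left)).trans (h.mono hW)).adj_right hvt
    (.inr (.inl rfl))

end ReachIn

theorem Walk.IsPath.start_notMem_support_tail {x y : V} {p : G.Walk x y} (hp : p.IsPath) :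
    x ∉ p.support.tail :=
  (List.nodup_cons.1 (by rw [p.cons_tail_support]; exact hp.support_nodup)).1

theorem Walk.two_le_length {x y : V} (p : G.Walk x y) (hxy : x ≠ y) (hadj : ¬G.Adj x y) :
    2 ≤ p.length := by
  by_contra! h
  interval_cases hp : p.length
  exacts [hxy (Walk.eq_of_length_eq_zero hp), hadj (Walk.adj_of_length_eq_one hp)]

theorem _root_.IsChordal.adj_of_reachIn (hG : IsChordal G) {A B : Set V} {s t : V}
    (hAB : ∀ x ∈ A, ∀ y ∈ B, ¬G.Adj x y) (hdisj : Disjoint A B)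
    (hA : G.ReachIn (insert s (insert t A)) s t) (hB : G.ReachIn (insert s (insert t B)) s t)
    (hst : s ≠ t) : G.Adj s t := by
  by_contra hnadj
  obtain ⟨p, hp, hpc, hpA⟩ := hA.exists_isPath_isChordless
  obtain ⟨q, hq, hqc, hqB⟩ := hB.exists_isPath_isChordless
  have hpq : ∀ z ∈ p.support, z ∈ A ∨ z ∈ q.support := by
    intro z hz
    rcases hpA z hz with rfl | rfl | hzA
    exacts [Or.inr q.start_mem_support, Or.inr q.end_mem_support, Or.inl hzA]
  have hqp : ∀ z ∈ q.support, z ∈ B ∨ z ∈ p.support := by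
    intro z hz
    rcases hqB z hz with rfl | rfl | hzB
    exacts [Or.inr p.start_mem_support, Or.inr p.end_mem_support, Or.inl hzB]
  have hcyc : (p.append q.reverse).IsCycle := by
    refine hp.isCycle_append hq.reverse (fun z hzp hzq => ?_) (Or.inl (p.two_le_length hst hnadj))
    have hzs : z ≠ s := fun h => hp.start_notMem_support_tail (h ▸ hzp)
    have hzt : z ≠ t := fun h => hq.reverse.start_notMem_support_tail (h ▸ hzq)
    have hzA := hpA z (List.mem_of_mem_tail hzp)
    have hzB := hqB z (by simpa using List.mem_of_mem_tail hzq)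
    simp only [Set.mem_insert_iff, hzs, hzt, false_or] at hzA hzB
    exact hdisj.notMem_of_mem_left hzA hzB
  obtain ⟨u, v, hu, hv, huv, he⟩ :=
    hG s _ hcyc (by simp only [Walk.length_append, Walk.length_reverse]
                    linarith [p.two_le_length hst hnadj, q.two_le_length hst hnadj])
  simp only [Walk.mem_support_append_iff, Walk.support_reverse, List.mem_reverse] at hu hv
  simp only [Walk.edges_append, Walk.edges_reverse, List.mem_append, List.mem_reverse,
    not_or] at he
  rcases hu with hu | hu <;> rcases hv with hv | hv
  · exact he.1 (hpc.mem_edges hu hv huv)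
  · rcases hpq u hu with huA | huq
    · rcases hqp v hv with hvB | hvp
      · exact hAB u huA v hvB huv
      · exact he.1 (hpc.mem_edges hu hvp huv)
    · exact he.2 (hqc.mem_edges huq hv huv)
  · rcases hpq v hv with hvA | hvq
    · rcases hqp u hu with huB | hup
      · exact hAB v hvA u huB huv.symm
      · exact he.1 (hpc.mem_edges hup hv huv)
    · exact he.2 (hqc.mem_edges hu hvq huv)
  · exact he.2 (hqc.mem_edges hu hv huv)

theorem exists_minimal_separator [Finite V] {S : Set V} {a b : V} (hab : a ≠ b)
    (hnadj : ¬G.Adj a b) :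
    ∃ T ⊆ S \ {a, b}, ¬G.ReachIn (S \ T) a b ∧ ∀ t ∈ T, G.ReachIn (insert t (S \ T)) a b := by
  have hsep : ¬G.ReachIn (S \ (S \ {a, b})) a b := by
    rintro ⟨w, hw⟩
    obtain ⟨d, hd, hfst, hsnd⟩ := w.exists_boundary_dart {a} rfl hab.symm
    obtain ⟨hS, hab'⟩ := hw d.snd (w.dart_snd_mem_support_of_mem_darts hd)
    have hb : d.snd = b := by simp_all
    exact hnadj (hfst ▸ hb ▸ d.adj)
  obtain ⟨T, hTle, ⟨hTS, hT⟩, hmin⟩ := exists_minimal_le_of_wellFoundedLT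
    (fun T : Set V => T ⊆ S \ {a, b} ∧ ¬G.ReachIn (S \ T) a b) _ ⟨subset_rfl, hsep⟩
  refine ⟨T, hTS, hT, fun t ht => ?_⟩
  by_contra hnt
  have hsub : S \ (T \ {t}) ⊆ insert t (S \ T) := fun x hx => by
    by_cases hxt : x = t
    · exact .inl hxt
    · exact .inr ⟨hx.1, fun hxT => hx.2 ⟨hxT, hxt⟩⟩
  have := hmin (y := T \ {t}) ⟨Set.sdiff_subset.trans hTS, fun h => hnt (h.mono hsub)⟩
    Set.sdiff_subset ht
  simp at this

/-- A minimal separator `T` of `a` and `b` is a clique; `U` is what remains after removing `T`. -/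
theorem _root_.IsChordal.isClique_of_separator (hG : IsChordal G) {U T : Set V} {a b : V}
    (ha : a ∈ U) (hb : b ∈ U) (hsep : ¬G.ReachIn U a b)
    (hmin : ∀ t ∈ T, G.ReachIn (insert t U) a b) : G.IsClique T := by
  intro s hs t ht hst
  have through : ∀ c d, c ∈ U → G.ReachIn (insert s U) c d → G.ReachIn (insert t U) c d →
      ¬G.ReachIn U c d → G.ReachIn (insert s (insert t {x | G.ReachIn U c x})) s t := by
    intro c d hc hs' ht' hcd
    obtain ⟨us, hus, hsus⟩ := hs'.exists_adj_of_not_reachIn hcd hc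
    obtain ⟨ut, hut, hutt⟩ := ht'.exists_adj_of_not_reachIn hcd hc
    exact (hus.reachIn_setOf.symm.trans hut.reachIn_setOf).insert_insert hsus.symm hutt
  refine hG.adj_of_reachIn (A := {x | G.ReachIn U a x}) (B := {x | G.ReachIn U b x})
    (fun x hx y hy hxy => hsep ((hx.adj_right hxy hy.mem_right).trans hy.symm))
    (Set.disjoint_left.2 fun x hx hy => hsep (hx.trans hy.symm))
    (through a b ha (hmin s hs) (hmin t ht) hsep)
    (through b a hb (hmin s hs).symm (hmin t ht).symm (fun h => hsep h.symm)) hst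

def IsSimplicialIn (G : SimpleGraph V) (S : Set V) (v : V) : Prop :=
  G.IsClique {u | u ∈ S ∧ G.Adj v u}

theorem IsSimplicialIn.mono {S W : Set V} {v : V} (h : G.IsSimplicialIn W v)
    (hSW : ∀ u ∈ S, G.Adj v u → u ∈ W) : G.IsSimplicialIn S v :=
  h.subset fun u hu => show u ∈ W ∧ G.Adj v u from ⟨hSW u hu.1 hu.2, hu.2⟩

/-- Dirac's lemma, strengthened by the clique `K` so that it can be proved by induction on `S`. -/
theorem _root_.IsChordal.exists_isSimplicialIn [Finite V] (hG : IsChordal G) {S K : Set V}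
    (hK : G.IsClique K) (hSK : ¬S ⊆ K) : ∃ v ∈ S \ K, G.IsSimplicialIn S v := by
  induction S using WellFoundedLT.induction generalizing K with | _ S ih =>
  by_cases hS : G.IsClique S
  · obtain ⟨x, hxS, hxK⟩ := Set.not_subset.1 hSK
    exact ⟨x, ⟨hxS, hxK⟩, hS.subset fun u hu => hu.1⟩
  obtain ⟨a, ha, b, hb, hab, hnadj⟩ : ∃ a ∈ S, ∃ b ∈ S, a ≠ b ∧ ¬G.Adj a b := by
    simpa [IsClique, Set.Pairwise] using hS
  obtain ⟨T, hTS, hsep, hmin⟩ := exists_minimal_separator (G := G) (S := S) hab hnadj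
  have haT : a ∈ S \ T := ⟨ha, fun h => (hTS h).2 (.inl rfl)⟩
  have hbT : b ∈ S \ T := ⟨hb, fun h => (hTS h).2 (.inr rfl)⟩
  have hT : G.IsClique T := hG.isClique_of_separator haT hbT hsep hmin
  -- The component of `c` in `G[S \ T]`, together with `T`, is a proper subset of `S`; a
  -- simplicial vertex of it outside `T` has all its `S`-neighbours inside it.
  have side : ∀ c ∈ S \ T, ∀ d ∈ S \ T, ¬G.ReachIn (S \ T) c d →
      ∃ v, G.ReachIn (S \ T) c v ∧ G.IsSimplicialIn S v := by
    intro c hc d hd hcd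
    have hlt : {x | G.ReachIn (S \ T) c x} ∪ T ⊂ S := by
      refine (Set.ssubset_iff_of_subset ?_).2 ⟨d, hd.1, ?_⟩
      · rintro x (hx | hx)
        exacts [hx.mem_right.1, (hTS hx).1]
      · rintro (hx | hx)
        exacts [hcd hx, hd.2 hx]
    obtain ⟨v, ⟨hvX | hvT, hvT'⟩, hv⟩ :=
      ih _ hlt hT fun h => hc.2 (h (.inl (ReachIn.refl hc)))
    · refine ⟨v, hvX, hv.mono fun u hu hvu => ?_⟩
      by_cases huT : u ∈ T
      exacts [.inr huT, .inl (hvX.adj_right hvu ⟨hu, huT⟩)]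
    · exact absurd hvT hvT'
  obtain ⟨va, hva, hsa⟩ := side a haT b hbT hsep
  obtain ⟨vb, hvb, hsb⟩ := side b hbT a haT fun h => hsep h.symm
  have hK' : va ∉ K ∨ vb ∉ K := by
    by_contra! h
    have hne : va ≠ vb := fun h' => hsep (hva.trans (h' ▸ hvb.symm))
    exact hsep ((hva.adj_right (hK h.1 h.2 hne) hvb.mem_right).trans hvb.symm)
  rcases hK' with h | h
  exacts [⟨va, ⟨hva.mem_right.1, h⟩, hsa⟩, ⟨vb, ⟨hvb.mem_right.1, h⟩, hsb⟩]

end SimpleGraph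

namespace Matrix

variable {n : Type*}

theorem PosSemidef.apply_eq_zero_of_diag_eq_zero {Q : Matrix n n ℝ} (hQ : Q.PosSemidef) {v : n}
    (hv : Q v v = 0) (u : n) : Q u v = 0 := by
  have h := (hQ.submatrix ![u, v]).det_nonneg
  have hsymm : Q v u = Q u v := by simpa using hQ.isHermitian.apply u v
  rw [det_fin_two] at h
  simp [hv, hsymm] at h
  nlinarith [sq_nonneg (Q u v)]

/-- The rank-one term removed in one step of a Cholesky factorisation with pivot `v`; it is `0`
when `Q v v = 0`, since then `(Q v v)⁻¹ = 0`, so no case split on the pivot is needed. -/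
noncomputable def pivotTerm (Q : Matrix n n ℝ) (v : n) : Matrix n n ℝ :=
  (Q v v)⁻¹ • vecMulVec (fun u => Q u v) (fun u => Q u v)

theorem pivotTerm_apply (Q : Matrix n n ℝ) (v a b : n) :
    Q.pivotTerm v a b = (Q v v)⁻¹ * (Q a v * Q b v) := by
  simp [pivotTerm, vecMulVec_apply]

theorem PosSemidef.pivotTerm [Finite n] {Q : Matrix n n ℝ} (hQ : Q.PosSemidef) (v : n) :
    (Q.pivotTerm v).PosSemidef := by
  simpa [Matrix.pivotTerm] using
    (posSemidef_vecMulVec_self_star fun u => Q u v).smul (inv_nonneg.2 hQ.diag_nonneg)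

/-- The Schur complement of a pivot is positive semidefinite: it is the congruence of `Q` by
the elimination matrix `1 - (Q v v)⁻¹ • eᵥ Q_{v,·}`. -/
theorem PosSemidef.sub_pivotTerm [Fintype n] {Q : Matrix n n ℝ} (hQ : Q.PosSemidef) (v : n) :
    (Q - Q.pivotTerm v).PosSemidef := by
  classical
  set P : Matrix n n ℝ := 1 - (Q v v)⁻¹ • vecMulVec (Pi.single v 1) (fun u => Q v u)
  have hsymm : ∀ a b, Q b a = Q a b := fun a b => by simpa using hQ.isHermitian.apply a b
  suffices Q - Q.pivotTerm v = Pᴴ * Q * P from this ▸ hQ.conjTranspose_mul_mul_same P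
  ext a b
  simp [P, Matrix.mul_apply, pivotTerm_apply, vecMulVec_apply, Matrix.one_apply, Pi.single_apply,
    sub_mul, mul_sub, Finset.sum_sub_distrib, hsymm _ v]
  rcases eq_or_ne (Q v v) 0 with h | h
  · simp [h]
  · field_simp
    ring

def SupportedOn {α : Type*} [Zero α] (R : Matrix n n α) (K : Set n) : Prop :=
  ∀ a b, ¬(a ∈ K ∧ b ∈ K) → R a b = 0

def HasSparsityPattern {α : Type*} [Zero α] (R : Matrix n n α) (G : SimpleGraph n) : Prop :=
  ∀ a b, a ≠ b → ¬G.Adj a b → R a b = 0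

section

variable {α : Type*} [Zero α] {R : Matrix n n α} {K L : Set n}

theorem SupportedOn.mono (h : R.SupportedOn K) (hKL : K ⊆ L) : R.SupportedOn L :=
  fun a b hab => h a b fun hK => hab ⟨hKL hK.1, hKL hK.2⟩

theorem SupportedOn.hasSparsityPattern {G : SimpleGraph n} (h : R.SupportedOn K)
    (hK : G.IsClique K) : R.HasSparsityPattern G :=
  fun a b hab hnadj => h a b fun ⟨ha, hb⟩ => hnadj (hK ha hb hab)

end

theorem pivotTerm_supportedOn {G : SimpleGraph n} {Q : Matrix n n ℝ} {S : Set n}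
    (hsp : Q.HasSparsityPattern G) (hS : Q.SupportedOn S) (v : n) :
    (Q.pivotTerm v).SupportedOn (insert v {u | u ∈ S ∧ G.Adj v u}) := by
  have hcol : ∀ a, Q a v ≠ 0 → a ∈ insert v {u | u ∈ S ∧ G.Adj v u} := by
    intro a ha
    by_cases hav : a = v
    · exact .inl hav
    · exact .inr ⟨by_contra fun h => ha (hS a v fun h' => h h'.1),
        by_contra fun h => ha (hsp a v hav fun h' => h h'.symm)⟩
  intro a b hab
  by_contra h
  rw [pivotTerm_apply] at h
  obtain ⟨ha, hb⟩ := mul_ne_zero_iff.1 (right_ne_zero_of_mul h)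
  exact hab ⟨hcol a ha, hcol b hb⟩

theorem PosSemidef.sub_pivotTerm_supportedOn [Fintype n] {Q : Matrix n n ℝ} (hQ : Q.PosSemidef)
    {S : Set n} {v : n} (hS : Q.SupportedOn S) (hP : (Q.pivotTerm v).SupportedOn S) :
    (Q - Q.pivotTerm v).SupportedOn (S \ {v}) := by
  have hR := hQ.sub_pivotTerm v
  have hvv : (Q - Q.pivotTerm v) v v = 0 := by
    rcases eq_or_ne (Q v v) 0 with h | h <;> simp [pivotTerm_apply, h]
  intro a b hab
  by_cases hav : a = v
  · subst hav
    simpa [hR.apply_eq_zero_of_diag_eq_zero hvv b] using hR.isHermitian.apply b a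
  by_cases hbv : b = v
  · exact hbv ▸ hR.apply_eq_zero_of_diag_eq_zero hvv a
  have hab' : ¬(a ∈ S ∧ b ∈ S) := fun h => hab ⟨⟨h.1, hav⟩, ⟨h.2, hbv⟩⟩
  simp [hS a b hab', hP a b hab']

def cliqueSupported (G : SimpleGraph n) : Set (Matrix n n ℝ) :=
  {R | R.PosSemidef ∧ ∃ K, G.IsClique K ∧ R.SupportedOn K}

theorem PosSemidef.mem_closure_cliqueSupported [Fintype n] {G : SimpleGraph n}
    (hG : IsChordal G) {Q : Matrix n n ℝ} (hQ : Q.PosSemidef) (hsp : Q.HasSparsityPattern G) :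
    Q ∈ AddSubmonoid.closure (cliqueSupported G) := by
  suffices ∀ S : Set n, ∀ Q : Matrix n n ℝ, Q.PosSemidef → Q.HasSparsityPattern G →
      Q.SupportedOn S → Q ∈ AddSubmonoid.closure (cliqueSupported G) from
    this Set.univ Q hQ hsp fun a b h => absurd ⟨trivial, trivial⟩ h
  intro S
  induction S using WellFoundedLT.induction with | _ S ih =>
  intro Q hQ hsp hS
  rcases S.eq_empty_or_nonempty with rfl | ⟨x, hx⟩
  · obtain rfl : Q = 0 := by
      ext a b
      exact hS a b (by simp)
    exact zero_mem _
  -- Eliminate a simplicial vertex `v` of `G[S]`: the pivot term lives on the clique formed by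
  -- `v` and its neighbours, and the Schur complement on `S \ {v}`.
  obtain ⟨v, ⟨hvS, -⟩, hv⟩ := hG.exists_isSimplicialIn (K := ∅) (by simp) fun h => h hx
  have hK : G.IsClique (insert v {u | u ∈ S ∧ G.Adj v u}) := hv.insert fun b hb _ => hb.2
  have hP := pivotTerm_supportedOn hsp hS v
  rw [← add_sub_cancel (Q.pivotTerm v) Q]
  refine add_mem (AddSubmonoid.subset_closure ⟨hQ.pivotTerm v, _, hK, hP⟩)
    (ih (S \ {v}) (Set.sdiff_singleton_ssubset.2 hvS) _ (hQ.sub_pivotTerm v) ?_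
      (hQ.sub_pivotTerm_supportedOn hS (hP.mono (Set.insert_subset hvS fun u hu => hu.1))))
  intro a b hab hnadj
  simp [hsp a b hab hnadj, hP.hasSparsityPattern hK a b hab hnadj]

section

variable {ι : Type*} [Fintype ι]

def posSemidefSumSupportedOn (C : ι → Set n) : AddSubmonoid (Matrix n n ℝ) where
  carrier := {M | ∃ R : ι → Matrix n n ℝ,
    (∀ k, (R k).PosSemidef ∧ (R k).SupportedOn (C k)) ∧ M = ∑ k, R k}
  zero_mem' := ⟨0, fun _ => ⟨.zero, fun _ _ _ => rfl⟩, by simp⟩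
  add_mem' := by
    rintro _ _ ⟨R, hR, rfl⟩ ⟨R', hR', rfl⟩
    refine ⟨R + R', fun k => ⟨(hR k).1.add (hR' k).1, fun a b h => ?_⟩, by
      simp [Finset.sum_add_distrib]⟩
    simp [(hR k).2 a b h, (hR' k).2 a b h]

theorem PosSemidef.mem_posSemidefSumSupportedOn {C : ι → Set n} {R : Matrix n n ℝ}
    (hR : R.PosSemidef) {k : ι} (hRk : R.SupportedOn (C k)) :
    R ∈ posSemidefSumSupportedOn C := by
  classical
  refine ⟨Pi.single k R, fun j => ?_, (Fintype.sum_pi_single' k R).symm⟩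
  by_cases hj : j = k
  · subst hj
    simpa using ⟨hR, hRk⟩
  · simpa [hj] using ⟨PosSemidef.zero, fun _ _ _ => rfl⟩

end

end Matrix

theorem SimpleGraph.IsClique.exists_isMaxClique'_superset {V : Type*} [Finite V]
    {G : SimpleGraph V} {K : Set V} (hK : G.IsClique K) :
    ∃ D : Finset V, IsMaxClique' G D ∧ K ⊆ D := by
  obtain ⟨D, -, hD⟩ := Finite.exists_le_maximal (a := K.toFinite.toFinset)
    (p := fun D : Finset V => G.IsClique (D : Set V) ∧ K ⊆ D) (by simpa using hK)
  obtain ⟨hDc, hKD⟩ := hD.prop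
  exact ⟨D, ⟨hDc, fun E hE hDE => (hD.eq_of_le ⟨hE, hKD.trans hDE⟩ hDE).symm⟩, hKD⟩

theorem stmt5_general {r t : ℕ} (G : SimpleGraph (Fin r)) (hG : IsChordal G)
    (C : Fin t → Finset (Fin r))
    (hall : ∀ D : Finset (Fin r), IsMaxClique' G D → ∃ k, D = C k)
    (Q : Matrix (Fin r) (Fin r) ℝ) (hQ : Q.PosSemidef)
    (hsp : ∀ u v : Fin r, u ≠ v → ¬ G.Adj u v → Q u v = 0) :
    ∃ Qk : Fin t → Matrix (Fin r) (Fin r) ℝ,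
      (∀ k, (Qk k).PosSemidef) ∧
      Q = ∑ k, Qk k ∧
      ∀ (k : Fin t) (u v : Fin r), ¬ (u ∈ C k ∧ v ∈ C k) → Qk k u v = 0 := by
  have hdec : Q ∈ Matrix.posSemidefSumSupportedOn fun k => (C k : Set (Fin r)) := by
    refine AddSubmonoid.closure_le.2 ?_ (hQ.mem_closure_cliqueSupported hG hsp)
    rintro R ⟨hR, K, hK, hRK⟩
    obtain ⟨D, hD, hKD⟩ := hK.exists_isMaxClique'_superset
    obtain ⟨k, rfl⟩ := hall D hD
    exact hR.mem_posSemidefSumSupportedOn (hRK.mono hKD)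
  obtain ⟨Qk, hQk, rfl⟩ := hdec
  exact ⟨Qk, fun k => (hQk k).1, rfl, fun k => (hQk k).2⟩

/-- Agler et al.: a PSD matrix with chordal sparsity pattern `G` decomposes as a sum of PSD
matrices supported on the maximal cliques of `G`. -/
theorem stmt5 {r t : ℕ} (G : SimpleGraph (Fin r)) (hG : IsChordal G)
    (C : Fin t → Finset (Fin r))
    (hmax : ∀ k, IsMaxClique' G (C k))
    (hall : ∀ D : Finset (Fin r), IsMaxClique' G D → ∃ k, D = C k)
    (Q : Matrix (Fin r) (Fin r) ℝ) (hQ : Q.PosSemidef)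
    (hsp : ∀ u v : Fin r, u ≠ v → ¬ G.Adj u v → Q u v = 0) :
    ∃ Qk : Fin t → Matrix (Fin r) (Fin r) ℝ,
      (∀ k, (Qk k).PosSemidef) ∧
      Q = ∑ k, Qk k ∧
      ∀ (k : Fin t) (u v : Fin r), ¬ (u ∈ C k ∧ v ∈ C k) → Qk k u v = 0 :=
  stmt5_general G hG C hall Q hQ hsp
end

section
/- Let f ∈ ℝ[x_1,…,x_n] and suppose f = Σ_{i=1}^t f_i² for polynomials f_1, …, f_t ∈ ℝ[x_1,…,x_n]. Then for every i and every α ∈ supp(f_i), the point 2α ∈ ℝ^n lies in the convex hull (taken in ℝ^n) of supp(f); equivalently, supp(f_i) ⊆ ½·New(f) where New(f) is the Newton polytope of f. -/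
/-! If `2α` lay outside `New(f)`, a separating linear functional would give real weights on
the variables under which every monomial of `f` weighs less than `2 · weight α`. Let `m` be the
largest weight of a monomial of some `g_k`. The weight-`2m` component of `∑ g_k²` is the sum of
the squares of the weight-`m` components of the `g_k`; a nonzero real sum of squares, it
provides a monomial of `f` of weight `2m ≥ 2 · weight α`. -/

open MvPolynomial Finsupp

theorem LinearMap.map_natCast_eq_weight {σ R : Type*} [Fintype σ] [DecidableEq σ]
    [CommSemiring R] (ℓ : (σ → R) →ₗ[R] R) (β : σ →₀ ℕ) :
    ℓ (fun j => (β j : R)) = weight (fun j => ℓ (Pi.single j 1)) β := by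
  rw [ℓ.pi_apply_eq_sum_univ, weight_apply, sum_fintype _ _ (by simp)]
  refine Finset.sum_congr rfl fun j _ => ?_
  rw [nsmul_eq_mul, smul_eq_mul]
  congr 2
  ext k
  simp [Pi.single_apply, eq_comm]

namespace MvPolynomial

variable {σ R M : Type*}

theorem weightedHomogeneousComponent_mul_of_le [CommSemiring R] [AddCommMonoid M] [LinearOrder M]
    [IsOrderedCancelAddMonoid M] {w : σ → M} {φ ψ : MvPolynomial σ R} {a b : M}
    (hφ : ∀ d ∈ φ.support, weight w d ≤ a) (hψ : ∀ d ∈ ψ.support, weight w d ≤ b) :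
    weightedHomogeneousComponent w (a + b) (φ * ψ) =
      weightedHomogeneousComponent w a φ * weightedHomogeneousComponent w b ψ := by
  classical
  ext d
  simp only [coeff_weightedHomogeneousComponent, coeff_mul]
  split_ifs with hd
  · refine Finset.sum_congr rfl fun ⟨x, y⟩ hxy => ?_
    by_cases hx : coeff x φ = 0
    · simp [hx]
    by_cases hy : coeff y ψ = 0
    · simp [hy]
    have hwx := hφ x (mem_support_iff.2 hx)
    have hwy := hψ y (mem_support_iff.2 hy)
    have hsum : weight w x + weight w y = a + b := by
      rw [← map_add, Finset.HasAntidiagonal.mem_antidiagonal.1 hxy, hd]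
    have hxa : weight w x = a := hwx.eq_of_not_lt fun h => (add_lt_add_of_lt_of_le h hwy).ne hsum
    have hyb : weight w y = b := hwy.eq_of_not_lt fun h => (add_lt_add_of_le_of_lt hwx h).ne hsum
    simp [hxa, hyb]
  · refine (Finset.sum_eq_zero fun ⟨x, y⟩ hxy => ?_).symm
    split_ifs with hxa hyb <;> simp only [zero_mul, mul_zero]
    exact absurd (by rw [← Finset.HasAntidiagonal.mem_antidiagonal.1 hxy, map_add, hxa, hyb]) hd

theorem eq_zero_of_sum_sq_eq_zero [CommRing R] [LinearOrder R]
    [IsStrictOrderedRing R] {ι : Type*} {s : Finset ι} {φ : ι → MvPolynomial σ R}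
    (h : ∑ k ∈ s, φ k ^ 2 = 0) {k : ι} (hk : k ∈ s) : φ k = 0 := by
  refine MvPolynomial.funext fun x => ?_
  have hx : ∑ k ∈ s, eval x (φ k) ^ 2 = 0 := by simpa using congrArg (eval x) h
  simpa using (Finset.sum_eq_zero_iff_of_nonneg fun k _ => sq_nonneg _).1 hx k hk

theorem exists_mem_support_sum_sq_two_nsmul_weight_le [CommRing R] [LinearOrder R]
    [IsStrictOrderedRing R] [AddCommMonoid M] [LinearOrder M] [IsOrderedCancelAddMonoid M]
    {ι : Type*} [Fintype ι] (w : σ → M) (g : ι → MvPolynomial σ R) {i : ι}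
    {α : σ →₀ ℕ} (hα : α ∈ (g i).support) :
    ∃ μ ∈ (∑ k, g k ^ 2).support, 2 • weight w α ≤ weight w μ := by
  classical
  set E := Finset.univ.biUnion fun k => (g k).support
  obtain ⟨β, hβE, hβmax⟩ :=
    E.exists_max_image (weight w) ⟨α, Finset.mem_biUnion.2 ⟨i, Finset.mem_univ _, hα⟩⟩
  obtain ⟨k₀, -, hβ⟩ := Finset.mem_biUnion.1 hβE
  set m := weight w β
  have hle : ∀ k, ∀ d ∈ (g k).support, weight w d ≤ m := fun k d hd =>
    hβmax d (Finset.mem_biUnion.2 ⟨k, Finset.mem_univ _, hd⟩)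
  have htop : weightedHomogeneousComponent w (m + m) (∑ k, g k ^ 2) =
      ∑ k, weightedHomogeneousComponent w m (g k) ^ 2 := by
    simp only [map_sum, sq]
    exact Finset.sum_congr rfl fun k _ => weightedHomogeneousComponent_mul_of_le (hle k) (hle k)
  have hk₀ : weightedHomogeneousComponent w m (g k₀) ≠ 0 := fun h0 => by
    have hβ0 := congrArg (coeff β) h0
    rw [coeff_weightedHomogeneousComponent, if_pos rfl, coeff_zero] at hβ0
    exact mem_support_iff.1 hβ hβ0
  obtain ⟨μ, hμ⟩ := support_nonempty.2 fun h0 =>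
    hk₀ (eq_zero_of_sum_sq_eq_zero (htop.symm.trans h0) (Finset.mem_univ k₀))
  rw [support_weightedHomogeneousComponent, Finset.mem_filter] at hμ
  exact ⟨μ, hμ.1, by rw [hμ.2, two_nsmul]; exact add_le_add (hle i α hα) (hle i α hα)⟩

end MvPolynomial

/-- If `f = Σ_i f_i²`, then for every `i` and every `α ∈ supp(f_i)`, the point `2α` lies
in the Newton polytope of `f`, i.e. `supp(f_i) ⊆ ½·New(f)`. -/
theorem stmt13 {n t : ℕ} (f : MvPolynomial (Fin n) ℝ)
    (g : Fin t → MvPolynomial (Fin n) ℝ) (heq : f = ∑ i, (g i) ^ 2) :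
    ∀ (i : Fin t), ∀ α ∈ (g i).support,
      (fun j : Fin n => (2 * α j : ℝ)) ∈
        convexHull ℝ
          ((fun β : Fin n →₀ ℕ => (fun j : Fin n => (β j : ℝ))) ''
            ((f.support : Set (Fin n →₀ ℕ)))) := by
  intro i α hα
  by_contra hnot
  obtain ⟨ℓ, c, hsupp, hαc⟩ := geometric_hahn_banach_closed_point (convex_convexHull ℝ _)
    ((f.support.finite_toSet.image _).isClosed_convexHull ℝ) hnot
  obtain ⟨μ, hμ, hαμ⟩ := exists_mem_support_sum_sq_two_nsmul_weight_le
    (fun j => (ℓ : (Fin n → ℝ) →ₗ[ℝ] ℝ) (Pi.single j 1)) g hα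
  rw [← heq] at hμ
  have hμc := hsupp _ (subset_convexHull ℝ _ ⟨μ, hμ, rfl⟩)
  have h2α : (fun j => (2 * α j : ℝ)) = fun j => ((2 • α) j : ℝ) := by
    ext j; simp
  rw [h2α] at hαc
  simp only [← ContinuousLinearMap.coe_coe ℓ, LinearMap.map_natCast_eq_weight, map_nsmul]
    at hαc hμc
  linarith
end
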